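/- Let n, d, ℓ ∈ ℕ and p ∈ (0,1). Suppose Q ⊆ [n]^d is a cube with dim(Q) = ℓ. Then P(Q,p) ≤ P(ℓ,p), where P(Q,p) is the probability that A ~ Bin(Q,p) internally spans Q and P(ℓ,p) is the probability that A ~ Bin([2]^ℓ,p) internally spans [2]^ℓ. -/

import Mathlib

/-- Adjacency in the grid graph `[n]^d`: two vertices are adjacent iff they differ
by exactly 1 in a single coordinate. -/
def gridAdj (n d : ℕ) (x y : Fin d → Fin n) : Prop :=
  ∃ i, ((x i : ℕ) + 1 = (y i : ℕ) ∨ (y i : ℕ) + 1 = (x i : ℕ)) ∧ ∀ j, j ≠ i → x j = y j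

/-- The grid graph `[n]^d`. -/
def gridGraph (n d : ℕ) : SimpleGraph (Fin d → Fin n) where
  Adj := gridAdj n d
  symm := by
    constructor
    rintro x y ⟨i, h1, h2⟩
    exact ⟨i, h1.symm, fun j hj => (h2 j hj).symm⟩
  loopless := by
    constructor
    rintro x ⟨i, h1, -⟩
    omega

/-- Graph distance from a vertex to a set in the grid graph. -/
noncomputable def gridSetDist (n d : ℕ) (x : Fin d → Fin n) (S : Set (Fin d → Fin n)) : ℕ :=
  sInf (Set.image (fun y => (gridGraph n d).dist x y) S)

/-- One step of `r`-neighbour bootstrap percolation. -/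
def bootStep {V : Type*} (adj : V → V → Prop) (r : ℕ) (A : Set V) : Set V :=
  A ∪ {v | r ≤ {u | adj v u ∧ u ∈ A}.ncard}

/-- The closure `[A]` of a set under `r`-neighbour bootstrap percolation. -/
def bootClosure {V : Type*} (adj : V → V → Prop) (r : ℕ) (A : Set V) : Set V :=
  ⋃ t, (bootStep adj r)^[t] A

/-- The dimension of a cube in `[n]^d`: the sum over coordinates of
(number of values taken in that coordinate minus one). -/
noncomputable def cubeDim {n d : ℕ} (Q : Set (Fin d → Fin n)) : ℕ :=
  ∑ i : Fin d, ((Set.image (fun x => x i) Q).ncard - 1)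

/-- A cube in `[n]^d` is a (nonempty) product of integer intervals. -/
def IsCube {n d : ℕ} (Q : Set (Fin d → Fin n)) : Prop :=
  ∃ lo hi : Fin d → Fin n, (∀ i, lo i ≤ hi i) ∧
    Q = {x | ∀ i, lo i ≤ x i ∧ x i ≤ hi i}

/-- A hypercube in `[n]^d` is a cube all of whose sides have length 1 or 2,
i.e. a copy of some `[2]^m`. -/
def IsHypercube {n d : ℕ} (Q : Set (Fin d → Fin n)) : Prop :=
  ∃ lo hi : Fin d → Fin n, (∀ i, lo i ≤ hi i ∧ (hi i : ℕ) ≤ (lo i : ℕ) + 1) ∧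
    Q = {x | ∀ i, lo i ≤ x i ∧ x i ≤ hi i}

/-- `Q` is internally spanned by `A`: the bootstrap closure of `A ∩ Q` is `Q`. -/
def IntSpans (n d : ℕ) (A Q : Set (Fin d → Fin n)) : Prop :=
  bootClosure (gridAdj n d) 2 (A ∩ Q) = Q

/-- A set is constant on the coordinates in `J`. -/
def ConstOn {n d : ℕ} (J : Set (Fin d)) (C : Set (Fin d → Fin n)) : Prop :=
  ∀ i ∈ J, ∀ x ∈ C, ∀ y ∈ C, x i = y i

/-- `C` belongs to `Q⟨J⟩`: `C` is a maximal subcube of `Q` constant on the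
coordinates in `J`. -/
def MaxConstSubcube (n d : ℕ) (Q : Set (Fin d → Fin n)) (J : Set (Fin d))
    (C : Set (Fin d → Fin n)) : Prop :=
  IsCube C ∧ C ⊆ Q ∧ ConstOn J C ∧
    ∀ C', IsCube C' → C' ⊆ Q → ConstOn J C' → C ⊆ C' → C' = C

/-- `{j,k}` is a final pair for `A` in `Q`. -/
def FinalPair (n d : ℕ) (A Q : Set (Fin d → Fin n)) (j k : Fin d) : Prop :=
  IntSpans n d A Q ∧
    ∃ C, MaxConstSubcube n d Q {j, k} C ∧ IntSpans n d A C ∧ (A \ C).ncard = 1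

/-- `{i}` is a final element for `A` in `Q`. -/
def FinalElt (n d : ℕ) (A Q : Set (Fin d → Fin n)) (i : Fin d) : Prop :=
  IntSpans n d A Q ∧
    ∃ C, MaxConstSubcube n d Q {i} C ∧ IntSpans n d A C ∧ (A \ C).ncard = 1

/-- `A` sequentially spans the hypercube `Q` (of dimension `2t`):
`|A| = t+1` and `A` admits an ordering `(a 0, …, a t)` with
`dist (a (j+1), [{a 0,…,a j}]) = 2` for all `j < t`. -/
def SeqSpans (n d : ℕ) (A Q : Set (Fin d → Fin n)) : Prop :=
  ∃ t : ℕ, cubeDim Q = 2 * t ∧ A ⊆ Q ∧ A.ncard = t + 1 ∧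
    bootClosure (gridAdj n d) 2 A = Q ∧
    ∃ a : Fin (t + 1) → (Fin d → Fin n), Function.Injective a ∧ Set.range a = A ∧
      ∀ j : Fin t, gridSetDist n d (a j.succ)
        (bootClosure (gridAdj n d) 2 (a '' {i | (i : ℕ) ≤ (j : ℕ)})) = 2

/-- `{j,k}` is an ending for `A` (in the full cube): some `A' ⊆ A` sequentially
spans one of the maximal subcubes constant on `{j,k}`. -/
def EndingPair (n d : ℕ) (A : Set (Fin d → Fin n)) (j k : Fin d) : Prop :=
  ∃ A', A' ⊆ A ∧ ∃ C, MaxConstSubcube n d Set.univ {j, k} C ∧ SeqSpans n d A' C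

/-- `Δ(b,C)`: the set of directions in which the vertex `b` and the cube `C`
are both constant and differ. -/
def Delta {n d : ℕ} (b : Fin d → Fin n) (C : Set (Fin d → Fin n)) : Set (Fin d) :=
  {i | (∀ x ∈ C, ∀ y ∈ C, x i = y i) ∧ ∀ x ∈ C, x i ≠ b i}

/-- The probability of an event `E` for a random subset `A ~ Bin(V,p)`,
each element included independently with probability `p`. -/
noncomputable def binProb {V : Type*} [Fintype V] (p : ℝ) (E : Finset V → Prop) : ℝ :=
  ∑ A : Finset V,
    Set.indicator {B | E B} (fun B => p ^ B.card * (1 - p) ^ (Fintype.card V - B.card)) A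

/-- The expectation of `f` for a random subset `A ~ Bin(V,p)`. -/
noncomputable def binExp {V : Type*} [Fintype V] (p : ℝ) (f : Finset V → ℝ) : ℝ :=
  ∑ A : Finset V, f A * (p ^ A.card * (1 - p) ^ (Fintype.card V - A.card))

/-- `P(ℓ,p)`: the probability that `A ~ Bin([2]^ℓ,p)` internally spans `[2]^ℓ`. -/
noncomputable def Pprob (ℓ : ℕ) (p : ℝ) : ℝ :=
  binProb p (fun A : Finset (Fin ℓ → Fin 2) =>
    bootClosure (gridAdj 2 ℓ) 2 (↑A : Set (Fin ℓ → Fin 2)) = Set.univ)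

/-- `Q(2ℓ,p)`: the probability that `A ~ Bin([2]^{2ℓ},p)` sequentially
internally spans `[2]^{2ℓ}`. -/
noncomputable def Qprob (ℓ : ℕ) (p : ℝ) : ℝ :=
  binProb p (fun A : Finset (Fin (2 * ℓ) → Fin 2) =>
    SeqSpans 2 (2 * ℓ) (↑A : Set (Fin (2 * ℓ) → Fin 2)) Set.univ)

/-- `|𝒮(ℓ)|`: the number of `(ℓ+1)`-subsets of `[2]^{2ℓ}` which sequentially span it. -/
noncomputable def Scard (ℓ : ℕ) : ℕ :=
  {A : Set (Fin (2 * ℓ) → Fin 2) | SeqSpans 2 (2 * ℓ) A Set.univ}.ncard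

/-- The probability that `A ~ Bin([n]^d,p)` percolates in `r`-neighbour
bootstrap percolation. -/
noncomputable def percProb (n d r : ℕ) (p : ℝ) : ℝ :=
  binProb p (fun A : Finset (Fin d → Fin n) =>
    bootClosure (gridAdj n d) r (↑A : Set (Fin d → Fin n)) = Set.univ)

/-- The critical probability `p_c([n]^d, r)`. -/
noncomputable def pc (n d r : ℕ) : ℝ :=
  sInf {p : ℝ | 0 ≤ p ∧ p ≤ 1 ∧ 1 / 2 ≤ percProb n d r p}

/-- The series `x ↦ ∑_{k≥0} (-1)^k x^k / (2^{k²-k} k!)`, whose smallest positive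
root is `λ ≈ 1.166`. -/
noncomputable def lamSeries (x : ℝ) : ℝ :=
  ∑' k : ℕ, (-1 : ℝ) ^ k * x ^ k / (2 ^ (k ^ 2 - k) * (Nat.factorial k))

/-!
A cube `Q` of dimension `ℓ` admits an injective, adjacency-preserving map `ι` into `[2]^ℓ`
whose image spans `[2]^ℓ`: remove the top face of a side of length at least two, embed the
rest by induction into the layer `last = 0`, and send each vertex of the removed face to the
layer `last = 1`, above the image of its neighbour below. Infection is carried along `ι`, so if
`A ∩ Q` spans `Q` then `ι (A ∩ Q)` spans `[2]^ℓ`. For `A ~ Bin(Q, p)` the set `ι (A ∩ Q)` is a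
`p`-random subset of `ι Q`, and spanning `[2]^ℓ` is an increasing event, so adding independent
random points outside `ι Q` can only raise its probability.
-/

section Bootstrap

variable {V W : Type*} {adj : V → V → Prop} {r : ℕ}

theorem subset_bootStep (A : Set V) : A ⊆ bootStep adj r A := Set.subset_union_left

theorem subset_bootClosure (A : Set V) : A ⊆ bootClosure adj r A :=
  fun _ hv => Set.mem_iUnion.mpr ⟨0, hv⟩

theorem monotone_iterate_bootStep (A : Set V) :
    Monotone fun t => (bootStep adj r)^[t] A :=
  monotone_nat_of_le_succ fun t => by
    rw [Function.iterate_succ_apply']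
    exact subset_bootStep _

variable [Finite V]

theorem bootStep_mono : Monotone (bootStep adj r) := by
  rintro A B hAB v (hv | hv)
  · exact Or.inl (hAB hv)
  · refine Or.inr (hv.trans (Set.ncard_le_ncard ?_ (Set.toFinite _)))
    exact fun u hu => ⟨hu.1, hAB hu.2⟩

theorem bootClosure_mono : Monotone (bootClosure adj r) :=
  fun _ _ hAB => Set.iUnion_mono fun t => (bootStep_mono (adj := adj) (r := r)).iterate t hAB

theorem mem_bootClosure_of_adj {A : Set V} {v u₁ u₂ : V} (hne : u₁ ≠ u₂)
    (h₁ : adj v u₁) (h₂ : adj v u₂) (hu₁ : u₁ ∈ bootClosure adj 2 A)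
    (hu₂ : u₂ ∈ bootClosure adj 2 A) : v ∈ bootClosure adj 2 A := by
  obtain ⟨t₁, ht₁⟩ := Set.mem_iUnion.mp hu₁
  obtain ⟨t₂, ht₂⟩ := Set.mem_iUnion.mp hu₂
  refine Set.mem_iUnion.mpr ⟨max t₁ t₂ + 1, ?_⟩
  rw [Function.iterate_succ_apply']
  have hsub : ({u₁, u₂} : Set V) ⊆ {u | adj v u ∧ u ∈ (bootStep adj 2)^[max t₁ t₂] A} := by
    rintro u (rfl | rfl)
    · exact ⟨h₁, monotone_iterate_bootStep A (le_max_left _ _) ht₁⟩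
    · exact ⟨h₂, monotone_iterate_bootStep A (le_max_right _ _) ht₂⟩
  exact Or.inr ((Set.ncard_pair hne).symm.le.trans (Set.ncard_le_ncard hsub (Set.toFinite _)))

theorem exists_adj_of_mem_bootStep {A : Set V} {v : V} (hv : v ∈ bootStep adj 2 A) (hvA : v ∉ A) :
    ∃ u₁ u₂, adj v u₁ ∧ u₁ ∈ A ∧ adj v u₂ ∧ u₂ ∈ A ∧ u₁ ≠ u₂ := by
  obtain ⟨u₁, u₂, hu₁, hu₂, hne⟩ :=
    (Set.one_lt_ncard_iff (Set.toFinite _)).mp (one_lt_two.trans_le (hv.resolve_left hvA))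
  exact ⟨u₁, u₂, hu₁.1, hu₁.2, hu₂.1, hu₂.2, hne⟩

theorem bootClosure_subset_of_bootStep_subset {A C : Set V} (hAC : A ⊆ C)
    (hC : bootStep adj r C ⊆ C) : bootClosure adj r A ⊆ C := by
  refine Set.iUnion_subset fun t => ?_
  induction t with
  | zero => exact hAC
  | succ t ih =>
      rw [Function.iterate_succ_apply']
      exact (bootStep_mono ih).trans hC

theorem bootClosure_bootClosure (A : Set V) :
    bootClosure adj 2 (bootClosure adj 2 A) = bootClosure adj 2 A := by
  refine (bootClosure_subset_of_bootStep_subset subset_rfl ?_).antisymm (subset_bootClosure _)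
  intro v hv
  by_cases hvA : v ∈ bootClosure adj 2 A
  · exact hvA
  · obtain ⟨u₁, u₂, h₁, hu₁, h₂, hu₂, hne⟩ := exists_adj_of_mem_bootStep hv hvA
    exact mem_bootClosure_of_adj hne h₁ h₂ hu₁ hu₂

theorem image_bootClosure_subset [Finite W] {adjW : W → W → Prop} {f : V → W} {Q A : Set V}
    (hAQ : bootClosure adj 2 A ⊆ Q) (hf : Set.InjOn f Q)
    (hadj : ∀ u ∈ Q, ∀ v ∈ Q, adj u v → adjW (f u) (f v)) :
    f '' bootClosure adj 2 A ⊆ bootClosure adjW 2 (f '' A) := by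
  set C := bootClosure adj 2 A ∩ f ⁻¹' bootClosure adjW 2 (f '' A)
  suffices bootClosure adj 2 A ⊆ C from Set.image_subset_iff.mpr fun v hv => (this hv).2
  refine bootClosure_subset_of_bootStep_subset
    (fun v hv => ⟨subset_bootClosure _ hv, subset_bootClosure _ ⟨v, hv, rfl⟩⟩) ?_
  intro v hv
  by_cases hvC : v ∈ C
  · exact hvC
  obtain ⟨u₁, u₂, h₁, hu₁, h₂, hu₂, hne⟩ := exists_adj_of_mem_bootStep hv hvC
  have hv' : v ∈ bootClosure adj 2 A := mem_bootClosure_of_adj hne h₁ h₂ hu₁.1 hu₂.1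
  have hvQ := hAQ hv'
  exact ⟨hv', mem_bootClosure_of_adj (fun h => hne (hf (hAQ hu₁.1) (hAQ hu₂.1) h))
    (hadj v hvQ u₁ (hAQ hu₁.1) h₁) (hadj v hvQ u₂ (hAQ hu₂.1) h₂) hu₁.2 hu₂.2⟩

end Bootstrap

noncomputable def binProbOn {V : Type*} (p : ℝ) (T : Finset V) (E : Finset V → Prop) : ℝ :=
  ∑ A ∈ T.powerset,
    Set.indicator {B | E B} (fun B => p ^ B.card * (1 - p) ^ (T.card - B.card)) A

section BinProbOn

variable {V W : Type*} {p : ℝ}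

theorem binProb_eq_binProbOn_univ [Fintype V] (E : Finset V → Prop) :
    binProb p E = binProbOn p Finset.univ E := by
  rw [binProb, binProbOn, Finset.powerset_univ, Finset.card_univ]

theorem binProbOn_congr {T : Finset V} {D E : Finset V → Prop} (h : ∀ A ⊆ T, D A ↔ E A) :
    binProbOn p T D = binProbOn p T E :=
  Finset.sum_congr rfl fun A hA => by
    classical
    simp only [Set.indicator_apply, Set.mem_ofPred_eq, h A (Finset.mem_powerset.mp hA)]

theorem binProbOn_mono (hp0 : 0 ≤ p) (hp1 : p ≤ 1) {T : Finset V} {D E : Finset V → Prop}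
    (h : ∀ A ⊆ T, D A → E A) : binProbOn p T D ≤ binProbOn p T E := by
  refine Finset.sum_le_sum fun A hA => ?_
  have hw : 0 ≤ p ^ A.card * (1 - p) ^ (T.card - A.card) := by
    have : 0 ≤ 1 - p := by linarith
    positivity
  classical
  simp only [Set.indicator_apply, Set.mem_ofPred_eq]
  split_ifs with hD hE hE
  · rfl
  · exact absurd (h A (Finset.mem_powerset.mp hA) hD) hE
  · exact hw
  · rfl

theorem binProbOn_image [DecidableEq W] {S : Finset V} {f : V → W} (hf : Set.InjOn f S)
    (E : Finset W → Prop) : binProbOn p (S.image f) E = binProbOn p S (fun A => E (A.image f)) := by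
  rw [binProbOn, Finset.powerset_image, Finset.sum_image (Finset.image_injOn_powerset_of_injOn hf),
    binProbOn, Finset.card_image_of_injOn hf]
  refine Finset.sum_congr rfl fun A hA => ?_
  classical
  simp only [Set.indicator_apply, Set.mem_ofPred_eq,
    Finset.card_image_of_injOn (hf.mono (Finset.mem_powerset.mp hA))]

variable [DecidableEq V]

theorem binProbOn_insert {T : Finset V} {a : V} (ha : a ∉ T) {E : Finset V → Prop}
    (hE : ∀ A ⊆ T, E (insert a A) ↔ E A) : binProbOn p (insert a T) E = binProbOn p T E := by
  rw [binProbOn, Finset.sum_powerset_insert ha, ← Finset.sum_add_distrib, binProbOn]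
  refine Finset.sum_congr rfl fun A hA => ?_
  have hAT := Finset.mem_powerset.mp hA
  have haA : a ∉ A := fun h => ha (hAT h)
  have hcard := Finset.card_le_card hAT
  classical
  simp only [Set.indicator_apply, Set.mem_ofPred_eq, hE A hAT, Finset.card_insert_of_notMem ha,
    Finset.card_insert_of_notMem haA]
  split_ifs
  · rw [Nat.sub_add_comm hcard, Nat.add_sub_add_right, pow_succ, pow_succ]
    ring
  · simp

theorem binProbOn_union {S U : Finset V} (hSU : Disjoint S U) {E : Finset V → Prop}
    (hE : ∀ A, E A ↔ E (A ∩ S)) : binProbOn p (S ∪ U) E = binProbOn p S E := by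
  induction U using Finset.induction_on with
  | empty => rw [Finset.union_empty]
  | insert a U ha ih =>
      have haS : a ∉ S := Finset.disjoint_right.mp hSU (Finset.mem_insert_self a U)
      rw [Finset.union_insert, binProbOn_insert (by simp [haS, ha]) fun A _ => by
        rw [hE, hE A, Finset.insert_inter_of_notMem haS]]
      exact ih (Finset.disjoint_of_subset_right (Finset.subset_insert a U) hSU)

theorem binProbOn_of_subset {S T : Finset V} (hST : S ⊆ T) {E : Finset V → Prop}
    (hE : ∀ A, E A ↔ E (A ∩ S)) : binProbOn p T E = binProbOn p S E := by
  rw [← binProbOn_union Finset.disjoint_sdiff hE, Finset.union_sdiff_of_subset hST]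

theorem binProbOn_le_of_subset (hp0 : 0 ≤ p) (hp1 : p ≤ 1) {S T : Finset V} (hST : S ⊆ T)
    {E : Finset V → Prop} (hE : ∀ A B, A ⊆ B → E A → E B) :
    binProbOn p S E ≤ binProbOn p T E :=
  calc binProbOn p S E = binProbOn p S (fun A => E (A ∩ S)) :=
        binProbOn_congr fun A hA => by rw [Finset.inter_eq_left.mpr hA]
    _ = binProbOn p T (fun A => E (A ∩ S)) :=
        (binProbOn_of_subset hST fun A => by rw [Finset.inter_assoc, Finset.inter_self]).symm
    _ ≤ binProbOn p T E := binProbOn_mono hp0 hp1 fun A _ => hE _ _ Finset.inter_subset_left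

theorem binProb_le_of_injOn [Fintype V] [Fintype W] [DecidableEq W] (hp0 : 0 ≤ p) (hp1 : p ≤ 1)
    {D : Finset V → Prop} {E : Finset W → Prop} (S : Finset V) {f : V → W}
    (hf : Set.InjOn f S) (hD : ∀ A, D A ↔ D (A ∩ S)) (hE : ∀ A B, A ⊆ B → E A → E B)
    (hDE : ∀ A ⊆ S, D A → E (A.image f)) : binProb p D ≤ binProb p E :=
  calc binProb p D = binProbOn p S D := by
        rw [binProb_eq_binProbOn_univ, binProbOn_of_subset (Finset.subset_univ S) hD]
    _ ≤ binProbOn p S (fun A => E (A.image f)) := binProbOn_mono hp0 hp1 hDE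
    _ = binProbOn p (S.image f) E := (binProbOn_image hf E).symm
    _ ≤ binProbOn p Finset.univ E := binProbOn_le_of_subset hp0 hp1 (Finset.subset_univ _) hE
    _ = binProb p E := (binProb_eq_binProbOn_univ E).symm

end BinProbOn

section Grid

variable {n d : ℕ} {x y : Fin d → Fin n}

theorem gridAdj.symm (h : gridAdj n d x y) : gridAdj n d y x := (gridGraph n d).adj_symm h

theorem gridAdj_iff_of_apply_ne {i : Fin d} (h : x i ≠ y i) :
    gridAdj n d x y ↔ ((x i : ℕ) + 1 = y i ∨ (y i : ℕ) + 1 = x i) ∧ ∀ j ≠ i, x j = y j := by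
  refine ⟨fun ⟨m, hm, hxy⟩ => ?_, fun hxy => ⟨i, hxy⟩⟩
  obtain rfl : m = i := by_contra fun hmi => h (hxy i (Ne.symm hmi))
  exact ⟨hm, hxy⟩

theorem gridAdj.update_update (h : gridAdj n d x y) {i : Fin d} (hi : x i = y i) (c : Fin n) :
    gridAdj n d (Function.update x i c) (Function.update y i c) := by
  obtain ⟨m, hm, hxy⟩ := h
  have hmi : m ≠ i := by rintro rfl; omega
  refine ⟨m, by simpa [Function.update_of_ne hmi] using hm, fun j hj => ?_⟩
  rcases eq_or_ne j i with rfl | hji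
  · simp
  · simp [Function.update_of_ne hji, hxy j hj]

theorem gridAdj.snoc (h : gridAdj n d x y) (c : Fin n) :
    gridAdj n (d + 1) (Fin.snoc x c) (Fin.snoc y c) := by
  obtain ⟨m, hm, hxy⟩ := h
  refine ⟨m.castSucc, by simpa using hm, fun j hj => ?_⟩
  induction j using Fin.lastCases with
  | last => simp
  | cast j => simpa using hxy j (fun h => hj (h ▸ rfl))

theorem gridAdj_snoc_snoc (x : Fin d → Fin n) {a b : Fin n} (hab : (a : ℕ) + 1 = b) :
    gridAdj n (d + 1) (Fin.snoc x a) (Fin.snoc x b) := by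
  refine ⟨Fin.last d, by simp [hab], fun j hj => ?_⟩
  obtain ⟨j, rfl⟩ := Fin.exists_castSucc_eq.mpr hj
  simp

theorem gridAdj_update_of_ne (x : Fin d → Fin 2) {i : Fin d} {c : Fin 2} (hc : c ≠ x i) :
    gridAdj 2 d x (Function.update x i c) := by
  refine (gridAdj_iff_of_apply_ne (by simpa using hc.symm)).mpr
    ⟨?_, fun j hj => (Function.update_of_ne hj c x).symm⟩
  have := Fin.val_ne_of_ne hc
  have := (x i).isLt
  have := c.isLt
  simp only [Function.update_self]
  omega

/-- Every vertex of the layer `last = 1` has a neighbour in the infected layer `last = 0`, so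
infection spreads from one vertex to the whole top layer. -/
theorem bootClosure_eq_univ_of_layers {ℓ : ℕ} {A : Set (Fin (ℓ + 1) → Fin 2)}
    (hbot : ∀ b, Fin.snoc b 0 ∈ bootClosure (gridAdj 2 (ℓ + 1)) 2 A) {b₀ : Fin ℓ → Fin 2}
    (htop : Fin.snoc b₀ 1 ∈ bootClosure (gridAdj 2 (ℓ + 1)) 2 A) :
    bootClosure (gridAdj 2 (ℓ + 1)) 2 A = Set.univ := by
  have hlayer : ∀ s : Finset (Fin ℓ), ∀ b : Fin ℓ → Fin 2, (∀ j ∉ s, b j = b₀ j) →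
      Fin.snoc b 1 ∈ bootClosure (gridAdj 2 (ℓ + 1)) 2 A := by
    intro s
    induction s using Finset.induction_on with
    | empty =>
        intro b hb
        rwa [funext fun j => hb j (Finset.notMem_empty j)]
    | insert j s _ ih =>
        intro b hb
        have hb' := ih (Function.update b j (b₀ j)) fun m hm => by
          rcases eq_or_ne m j with rfl | hmj
          · simp
          · simpa [Function.update_of_ne hmj] using hb m (by simp [hmj, hm])
        by_cases hbj : b₀ j = b j
        · rwa [Function.update_eq_self_iff.mpr hbj] at hb'
        · refine mem_bootClosure_of_adj (fun h => ?_) ((gridAdj_update_of_ne b hbj).snoc 1)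
            (gridAdj_snoc_snoc (a := 0) (b := 1) b rfl).symm hb' (hbot b)
          simpa using (Fin.snoc_inj.mp h).2
  refine Set.eq_univ_of_forall fun z => ?_
  rw [← Fin.snoc_init_self z]
  generalize z (Fin.last ℓ) = ε
  fin_cases ε
  · exact hbot _
  · exact hlayer Finset.univ _ (by simp)

end Grid

structure IsSpanningEmbedding {V : Type*} (adj : V → V → Prop) (Q : Set V) {ℓ : ℕ}
    (ι : V → Fin ℓ → Fin 2) : Prop where
  injOn : Set.InjOn ι Q
  map_adj : ∀ u ∈ Q, ∀ v ∈ Q, adj u v → gridAdj 2 ℓ (ι u) (ι v)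
  bootClosure_image : bootClosure (gridAdj 2 ℓ) 2 (ι '' Q) = Set.univ

open Classical in
noncomputable def snocExtend {V : Type*} {ℓ : ℕ} (Q' : Set V) (ι' : V → Fin ℓ → Fin 2)
    (σ : V → V) (x : V) : Fin (ℓ + 1) → Fin 2 :=
  if x ∈ Q' then Fin.snoc (ι' x) 0 else Fin.snoc (ι' (σ x)) 1

namespace IsSpanningEmbedding

variable {V : Type*} {adj : V → V → Prop} {ℓ : ℕ}

theorem singleton {v : V} (hv : ¬ adj v v) :
    IsSpanningEmbedding adj {v} (fun _ => (Fin.elim0 : Fin 0 → Fin 2)) where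
  injOn := Set.injOn_singleton _ _
  map_adj := by
    rintro u rfl v rfl huv
    exact absurd huv hv
  bootClosure_image :=
    Set.eq_univ_of_forall fun _ => subset_bootClosure _ ⟨v, rfl, Subsingleton.elim _ _⟩

theorem bootClosure_image_eq_univ [Finite V] {Q A : Set V} {ι : V → Fin ℓ → Fin 2}
    (hι : IsSpanningEmbedding adj Q ι) (hA : bootClosure adj 2 A = Q) :
    bootClosure (gridAdj 2 ℓ) 2 (ι '' A) = Set.univ := by
  refine Set.eq_univ_of_univ_subset ?_
  calc Set.univ = bootClosure (gridAdj 2 ℓ) 2 (ι '' bootClosure adj 2 A) := by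
        rw [hA, hι.bootClosure_image]
    _ ⊆ bootClosure (gridAdj 2 ℓ) 2 (bootClosure (gridAdj 2 ℓ) 2 (ι '' A)) :=
        bootClosure_mono (image_bootClosure_subset hA.subset hι.injOn hι.map_adj)
    _ = bootClosure (gridAdj 2 ℓ) 2 (ι '' A) := bootClosure_bootClosure _

section snocExtend

variable {Q Q' : Set V} {ι' : V → Fin ℓ → Fin 2} {σ : V → V}

theorem snocExtend_of_mem {x : V} (hx : x ∈ Q') :
    snocExtend Q' ι' σ x = Fin.snoc (ι' x) 0 := if_pos hx

theorem snocExtend_of_notMem {x : V} (hx : x ∉ Q') :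
    snocExtend Q' ι' σ x = Fin.snoc (ι' (σ x)) 1 := if_neg hx

theorem injOn_snocExtend (hι' : IsSpanningEmbedding adj Q' ι')
    (hσQ' : Set.MapsTo σ (Q \ Q') Q') (hσ : Set.InjOn σ (Q \ Q')) :
    Set.InjOn (snocExtend Q' ι' σ) Q := by
  intro x hx y hy hxy
  by_cases hx' : x ∈ Q' <;> by_cases hy' : y ∈ Q' <;>
    simp only [snocExtend, hx', hy', if_true, if_false, Fin.snoc_inj] at hxy
  · exact hι'.injOn hx' hy' hxy.1
  · exact absurd hxy.2 (by decide)
  · exact absurd hxy.2 (by decide)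
  · exact hσ ⟨hx, hx'⟩ ⟨hy, hy'⟩ (hι'.injOn (hσQ' ⟨hx, hx'⟩) (hσQ' ⟨hy, hy'⟩) hxy.1)

theorem map_adj_snocExtend (hι' : IsSpanningEmbedding adj Q' ι')
    (hσQ' : Set.MapsTo σ (Q \ Q') Q') (hsymm : Std.Symm adj)
    (hcross : ∀ u ∈ Q', ∀ v ∈ Q \ Q', adj u v → u = σ v)
    (hσ : ∀ u ∈ Q \ Q', ∀ v ∈ Q \ Q', adj u v → adj (σ u) (σ v)) :
    ∀ u ∈ Q, ∀ v ∈ Q, adj u v →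
      gridAdj 2 (ℓ + 1) (snocExtend Q' ι' σ u) (snocExtend Q' ι' σ v) := by
  intro u hu v hv huv
  by_cases hu' : u ∈ Q' <;> by_cases hv' : v ∈ Q' <;>
    simp only [snocExtend, hu', hv', if_true, if_false]
  · exact (hι'.map_adj u hu' v hv' huv).snoc 0
  · rw [hcross u hu' v ⟨hv, hv'⟩ huv]
    exact gridAdj_snoc_snoc _ rfl
  · rw [hcross v hv' u ⟨hu, hu'⟩ (hsymm.symm _ _ huv)]
    exact (gridAdj_snoc_snoc _ rfl).symm
  · exact (hι'.map_adj _ (hσQ' ⟨hu, hu'⟩) _ (hσQ' ⟨hv, hv'⟩)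
      (hσ u ⟨hu, hu'⟩ v ⟨hv, hv'⟩ huv)).snoc 1

theorem bootClosure_image_snocExtend (hι' : IsSpanningEmbedding adj Q' ι') (hQ' : Q' ⊆ Q)
    {x₀ : V} (hx₀ : x₀ ∈ Q \ Q') :
    bootClosure (gridAdj 2 (ℓ + 1)) 2 (snocExtend Q' ι' σ '' Q) = Set.univ := by
  refine bootClosure_eq_univ_of_layers (fun b => ?_)
    (subset_bootClosure _ ⟨x₀, hx₀.1, snocExtend_of_notMem hx₀.2⟩)
  have hbot := image_bootClosure_subset (adj := gridAdj 2 ℓ) (adjW := gridAdj 2 (ℓ + 1))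
    (f := fun b => Fin.snoc b 0) (A := ι' '' Q') (Set.subset_univ _)
    (fun _ _ _ _ h => (Fin.snoc_inj.mp h).1) (fun _ _ _ _ h => h.snoc 0)
  refine bootClosure_mono ?_ (hbot ⟨b, hι'.bootClosure_image ▸ Set.mem_univ b, rfl⟩)
  rintro _ ⟨_, ⟨x, hx, rfl⟩, rfl⟩
  exact ⟨x, hQ' hx, snocExtend_of_mem hx⟩

end snocExtend

theorem exists_succ {Q Q' : Set V} {ι' : V → Fin ℓ → Fin 2}
    (hι' : IsSpanningEmbedding adj Q' ι') (hsymm : Std.Symm adj) (hQ' : Q' ⊆ Q)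
    (hne : (Q \ Q').Nonempty) (σ : V → V)
    (hσQ' : Set.MapsTo σ (Q \ Q') Q') (hσ : Set.InjOn σ (Q \ Q'))
    (hcross : ∀ u ∈ Q', ∀ v ∈ Q \ Q', adj u v → u = σ v)
    (hσadj : ∀ u ∈ Q \ Q', ∀ v ∈ Q \ Q', adj u v → adj (σ u) (σ v)) :
    ∃ ι : V → Fin (ℓ + 1) → Fin 2, IsSpanningEmbedding adj Q ι :=
  ⟨snocExtend Q' ι' σ, injOn_snocExtend hι' hσQ' hσ,
    map_adj_snocExtend hι' hσQ' hsymm hcross hσadj,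
    bootClosure_image_snocExtend hι' hQ' hne.some_mem⟩

end IsSpanningEmbedding

section Cube

variable {n d : ℕ}

theorem IsCube.exists_eq_Icc {Q : Set (Fin d → Fin n)} (hQ : IsCube Q) :
    ∃ lo hi, lo ≤ hi ∧ Q = Set.Icc lo hi := by
  obtain ⟨lo, hi, hle, rfl⟩ := hQ
  exact ⟨lo, hi, hle, by ext x; simp [Pi.le_def, forall_and]⟩

theorem cubeDim_Icc {lo hi : Fin d → Fin n} (hle : lo ≤ hi) :
    cubeDim (Set.Icc lo hi) = ∑ i, ((hi i : ℕ) - lo i) := by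
  refine Finset.sum_congr rfl fun i _ => ?_
  change (Function.eval i '' Set.Icc lo hi).ncard - 1 = _
  rw [← Set.pi_univ_Icc,
    Set.eval_image_pi (Set.mem_univ i) (Set.pi_univ_Icc lo hi ▸ Set.nonempty_Icc.mpr hle),
    Set.ncard_eq_toFinset_card', Set.toFinset_Icc, Fin.card_Icc]
  omega

theorem IsSpanningEmbedding.exists_Icc_of_Icc_update {ℓ : ℕ} {lo hi : Fin d → Fin n}
    {i : Fin d} {k : Fin n} {ι' : (Fin d → Fin n) → Fin ℓ → Fin 2}
    (hι' : IsSpanningEmbedding (gridAdj n d) (Set.Icc lo (Function.update hi i k)) ι')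
    (hk : (k : ℕ) + 1 = hi i) (hlo : lo ≤ Function.update hi i k) :
    ∃ ι : (Fin d → Fin n) → Fin (ℓ + 1) → Fin 2,
      IsSpanningEmbedding (gridAdj n d) (Set.Icc lo hi) ι := by
  have hki : k < hi i := Fin.lt_def.mpr (by omega)
  have hsub : Function.update hi i k ≤ hi := update_le_iff.mpr ⟨hki.le, fun _ _ => le_rfl⟩
  have htop : ∀ x ∈ Set.Icc lo hi \ Set.Icc lo (Function.update hi i k), x i = hi i := by
    rintro x ⟨⟨hlx, hxh⟩, hx⟩
    by_contra hne
    have : (x i : ℕ) < hi i := Fin.lt_def.mp (lt_of_le_of_ne (hxh i) hne)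
    exact hx ⟨hlx, le_update_iff.mpr ⟨Fin.le_def.mpr (by omega), fun j _ => hxh j⟩⟩
  refine hι'.exists_succ (gridGraph n d).symm (Set.Icc_subset_Icc_right hsub)
    ⟨hi, ⟨hlo.trans hsub, le_rfl⟩, fun h => hki.not_ge (by simpa using h.2 i)⟩
    (fun x => Function.update x i k) ?_ ?_ ?_ ?_
  · rintro x ⟨⟨hlx, hxh⟩, -⟩
    exact ⟨le_update_iff.mpr ⟨by simpa using hlo i, fun j _ => hlx j⟩,
      update_le_update_iff.mpr ⟨le_rfl, fun j _ => hxh j⟩⟩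
  · intro x hx y hy hxy
    have hrecover : ∀ z ∈ Set.Icc lo hi \ Set.Icc lo (Function.update hi i k),
        z = Function.update (Function.update z i k) i (hi i) := fun z hz => by
      simp [← htop z hz]
    rw [hrecover x hx, hrecover y hy, show Function.update x i k = Function.update y i k from hxy]
  · rintro u ⟨-, hu⟩ v hv huv
    have hui : (u i : ℕ) ≤ k := Fin.le_def.mp (by simpa using hu i)
    have hvi := htop v hv
    obtain ⟨hval, hrest⟩ :=
      (gridAdj_iff_of_apply_ne (fun h => by rw [h, hvi] at hui; omega)).mp huv
    rw [hvi] at hval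
    exact Function.eq_update_iff.mpr ⟨Fin.ext (by omega), hrest⟩
  · exact fun u hu v hv huv => huv.update_update ((htop u hu).trans (htop v hv).symm) k

theorem exists_isSpanningEmbedding_Icc (ℓ : ℕ) {lo hi : Fin d → Fin n} (hle : lo ≤ hi)
    (hdim : ∑ i, ((hi i : ℕ) - lo i) = ℓ) :
    ∃ ι : (Fin d → Fin n) → Fin ℓ → Fin 2,
      IsSpanningEmbedding (gridAdj n d) (Set.Icc lo hi) ι := by
  induction ℓ generalizing hi with
  | zero =>
      obtain rfl : hi = lo := funext fun i => Fin.ext <| by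
        have := Finset.sum_eq_zero_iff.mp hdim i (Finset.mem_univ i)
        have := Fin.le_def.mp (hle i)
        omega
      rw [Set.Icc_self]
      exact ⟨_, .singleton (gridGraph n d).irrefl⟩
  | succ ℓ ih =>
      obtain ⟨i, -, hi0⟩ := Finset.exists_ne_zero_of_sum_ne_zero (hdim.trans_ne ℓ.succ_ne_zero)
      have hlt : (lo i : ℕ) < hi i := by
        have := Fin.le_def.mp (hle i)
        omega
      set k : Fin n := ⟨hi i - 1, by omega⟩
      have hlo : lo ≤ Function.update hi i k :=
        le_update_iff.mpr ⟨Fin.le_def.mpr (by simp only [k]; omega), fun j _ => hle j⟩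
      have hsplit : ∀ j, (hi j : ℕ) - lo j =
          ((Function.update hi i k j : ℕ) - lo j) + (Pi.single i 1 : Fin d → ℕ) j := by
        intro j
        rcases eq_or_ne j i with rfl | hji
        · simp only [Function.update_self, Pi.single_eq_same, k]
          omega
        · simp [hji]
      rw [Finset.sum_congr rfl fun j _ => hsplit j, Finset.sum_add_distrib,
        Finset.sum_pi_single'] at hdim
      obtain ⟨ι', hι'⟩ := ih hlo (by simpa using hdim)
      exact hι'.exists_Icc_of_Icc_update (by simp only [k]; omega) hlo

end Cube

/-- Coupling lemma: the probability that an arbitrary cube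
`Q ⊆ [n]^d` of dimension `ℓ` is internally spanned is at most `P(ℓ,p)`. -/
theorem arbitrary_cube_coupling {n d : ℕ} (ℓ : ℕ) (p : ℝ) (hp0 : 0 < p) (hp1 : p < 1)
    (Q : Set (Fin d → Fin n)) (hQ : IsCube Q) (hdim : cubeDim Q = ℓ) :
    binProb p (fun A : Finset (Fin d → Fin n) =>
        IntSpans n d (↑A : Set (Fin d → Fin n)) Q) ≤ Pprob ℓ p := by
  obtain ⟨lo, hi, hle, rfl⟩ := hQ.exists_eq_Icc
  obtain ⟨ι, hι⟩ := exists_isSpanningEmbedding_Icc ℓ hle (cubeDim_Icc hle ▸ hdim)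
  refine binProb_le_of_injOn hp0.le hp1.le (Finset.Icc lo hi) (by simpa using hι.injOn)
    (fun A => by simp [IntSpans, Set.inter_assoc]) (fun A B hAB hA => ?_) (fun A hA hspan => ?_)
  · exact Set.eq_univ_of_univ_subset (hA ▸ bootClosure_mono (Finset.coe_subset.mpr hAB))
  · rw [IntSpans, Set.inter_eq_left.mpr (by simpa using Finset.coe_subset.mpr hA)] at hspan
    simpa using hι.bootClosure_image_eq_univ hspan
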